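/- With p₅ and α(ψ) as above, if ψ is a skew-symmetric Lie series (ψ(x₀,x₁) = −ψ(x₁,x₀)), then α(ψ) = ψ(x₁₂,x₂₃) + ψ(x₂₃,x₃₄) + ψ(x₃₄,x₄₅) + ψ(x₄₅,x₅₁) + ψ(x₅₁,x₁₂), and α(ψ) lies in the kernel of pr_i for every i ∈ {1,…,5}; consequently α(ψ) ∈ ker(pr_i) ∩ ker(pr_j) for all i ≠ j. -/

import Mathlib

open scoped BigOperators

noncomputable section

variable (k : Type*) [Field k] [CharZero k]

/-- the (completed) free Lie algebra on two generators, `p₄` -/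
abbrev L2 := FreeLieAlgebra k (Fin 2)

def X0 : L2 k := FreeLieAlgebra.of k 0
def X1 : L2 k := FreeLieAlgebra.of k 1

/-- substitution `ψ ↦ ψ(u,v)` into a Lie series, via the universal property -/
def lsub {P : Type*} [LieRing P] [LieAlgebra k P] (u v : P) : L2 k →ₗ⁅k⁆ P :=
  FreeLieAlgebra.lift k (fun i : Fin 2 => if i = 0 then u else v)

/-- the defect `α(ψ) = ψ₄₅₁ + ψ₁₂₃ − ψ₄₃₂ − ψ₂₁₅ − ψ₅₄₃` of the pentagon equation,
with strands `1,…,5` indexed by `0,…,4`. -/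
def defect {P : Type*} [LieRing P] [LieAlgebra k P] (x : Fin 5 → Fin 5 → P)
    (ψ : L2 k) : P :=
  lsub k (x 3 4) (x 4 0) ψ + lsub k (x 0 1) (x 1 2) ψ -
    lsub k (x 3 2) (x 2 1) ψ - lsub k (x 1 0) (x 0 4) ψ - lsub k (x 4 3) (x 3 2) ψ

/-!
Skew-symmetry `ψ(u,v) = -ψ(v,u)` pairs the three negative terms of `α(ψ)` with the missing
terms of the cyclic sum `∑ₐ ψ(x_{a,a+1}, x_{a+1,a+2})`. The cyclic sum is invariant under
rotating the strands, so it suffices to kill strand `1`. There the image of the sum is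
`ψ(0,u) + ψ(u,v) + ψ(v,u') + ψ(u',0) + ψ(0,0)` with `u = x₂₃`, `v = x₃₄`, `u' = x₄₅`, which
vanishes by skew-symmetry once `u = u'`. That holds in `p₄`: adding the row relations of strands
`2, 3` and subtracting those of `4, 5` gives `2 (x₂₃ - x₄₅) = 0`.
-/

section Substitution

omit [CharZero k]

variable {k} {P : Type*} [LieRing P] [LieAlgebra k P]

lemma lsub_X0 (u v : P) : lsub k u v (X0 k) = u := by
  simp [lsub, X0, FreeLieAlgebra.lift_of_apply]

lemma lsub_X1 (u v : P) : lsub k u v (X1 k) = v := by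
  simp [lsub, X1, FreeLieAlgebra.lift_of_apply]

lemma lsub_zero_zero : lsub k (0 : P) 0 = 0 :=
  FreeLieAlgebra.hom_ext fun i => by fin_cases i <;> simp [lsub, FreeLieAlgebra.lift_of_apply]

lemma LieHom.comp_lsub {Q : Type*} [LieRing Q] [LieAlgebra k Q] (F : P →ₗ⁅k⁆ Q) (u v : P) :
    F.comp (lsub k u v) = lsub k (F u) (F v) :=
  FreeLieAlgebra.hom_ext fun i => by fin_cases i <;> simp [lsub, FreeLieAlgebra.lift_of_apply]

lemma LieHom.map_lsub {Q : Type*} [LieRing Q] [LieAlgebra k Q] (F : P →ₗ⁅k⁆ Q) (u v : P)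
    (ψ : L2 k) : F (lsub k u v ψ) = lsub k (F u) (F v) ψ := by
  rw [← F.comp_lsub]
  rfl

lemma lsub_swap {ψ : L2 k} (hskew : lsub k (X1 k) (X0 k) ψ = -ψ) (u v : P) :
    lsub k v u ψ = -lsub k u v ψ := by
  have h := (lsub k u v).map_lsub (X1 k) (X0 k) ψ
  rwa [hskew, map_neg, lsub_X0, lsub_X1, eq_comm] at h

end Substitution

section CyclicForm

omit [CharZero k]

variable {k} {P : Type*} [LieRing P] [LieAlgebra k P]

variable (k) in
def cyclicDefect (x : Fin 5 → Fin 5 → P) (ψ : L2 k) : P :=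
  ∑ a : Fin 5, lsub k (x a (a + 1)) (x (a + 1) (a + 2)) ψ

lemma LieHom.map_defect {Q : Type*} [LieRing Q] [LieAlgebra k Q] (F : P →ₗ⁅k⁆ Q)
    (x : Fin 5 → Fin 5 → P) (ψ : L2 k) :
    F (defect k x ψ) = defect k (fun a b => F (x a b)) ψ := by
  simp only [defect, map_sub, map_add, F.map_lsub]

variable {x : Fin 5 → Fin 5 → P} {ψ : L2 k}

lemma defect_eq_cyclic (hsymm : ∀ i j, x i j = x j i)
    (hskew : lsub k (X1 k) (X0 k) ψ = -ψ) :
    defect k x ψ =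
      lsub k (x 0 1) (x 1 2) ψ + lsub k (x 1 2) (x 2 3) ψ + lsub k (x 2 3) (x 3 4) ψ +
        lsub k (x 3 4) (x 4 0) ψ + lsub k (x 4 0) (x 0 1) ψ := by
  rw [defect, hsymm 3 2, hsymm 2 1, hsymm 1 0, hsymm 0 4, hsymm 4 3,
    lsub_swap hskew (x 1 2) (x 2 3), lsub_swap hskew (x 4 0) (x 0 1),
    lsub_swap hskew (x 2 3) (x 3 4)]
  abel

lemma defect_eq_cyclicDefect (hsymm : ∀ i j, x i j = x j i)
    (hskew : lsub k (X1 k) (X0 k) ψ = -ψ) : defect k x ψ = cyclicDefect k x ψ := by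
  rw [defect_eq_cyclic hsymm hskew, cyclicDefect, Fin.sum_univ_five]
  simp

lemma cyclicDefect_rotate (i : Fin 5) :
    cyclicDefect k (fun a b => x (a + i) (b + i)) ψ = cyclicDefect k x ψ := by
  simp only [cyclicDefect, add_right_comm _ (1 : Fin 5) i, add_right_comm _ (2 : Fin 5) i]
  exact Equiv.sum_comp (Equiv.addRight i) fun a => lsub k (x a (a + 1)) (x (a + 1) (a + 2)) ψ

end CyclicForm

lemma opposite_eq_of_strand_zero_eq_zero {A : Type*} [AddCommGroup A] [IsAddTorsionFree A]
    {y : Fin 5 → Fin 5 → A} (hsymm : ∀ i j, y i j = y j i) (hdiag : ∀ i, y i i = 0)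
    (hsum : ∀ i, ∑ j, y i j = 0) (h0 : ∀ j, y 0 j = 0) : y 1 2 = y 3 4 := by
  have row : ∀ a, y a 1 + y a 2 + y a 3 + y a 4 = 0 := fun a => by
    simpa [Fin.sum_univ_five, hsymm a 0, h0] using hsum a
  have r1 := row 1
  have r2 := row 2
  have r3 := row 3
  have r4 := row 4
  simp only [hdiag, hsymm 2 1, hsymm 3 1, hsymm 3 2, hsymm 4 1, hsymm 4 2, hsymm 4 3, zero_add,
    add_zero] at r1 r2 r3 r4
  have h : 2 • (y 1 2 - y 3 4) = 0 := by
    linear_combination (norm := module) r1 + r2 - r3 - r4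
  rwa [two_nsmul_eq_zero, sub_eq_zero] at h

section Kernels

variable {k} {P : Type*} [LieRing P] [LieAlgebra k P] {x : Fin 5 → Fin 5 → P} {ψ : L2 k}

lemma cyclicDefect_eq_zero_of_strand_zero_eq_zero (hsymm : ∀ i j, x i j = x j i)
    (hdiag : ∀ i, x i i = 0) (hsum : ∀ i, ∑ j, x i j = 0)
    (hskew : lsub k (X1 k) (X0 k) ψ = -ψ) (h0 : ∀ j, x 0 j = 0) : cyclicDefect k x ψ = 0 := by
  have : IsAddTorsionFree P := .of_isTorsionFree k P
  have h34 := opposite_eq_of_strand_zero_eq_zero hsymm hdiag hsum h0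
  rw [cyclicDefect, Fin.sum_univ_five]
  simp only [Fin.reduceAdd, h0, hsymm 4 0, ← h34, lsub_zero_zero, LieHom.zero_apply,
    lsub_swap hskew (x 2 3) (x 1 2), lsub_swap hskew 0 (x 1 2)]
  abel

lemma cyclicDefect_eq_zero_of_strand_eq_zero (hsymm : ∀ i j, x i j = x j i)
    (hdiag : ∀ i, x i i = 0) (hsum : ∀ i, ∑ j, x i j = 0)
    (hskew : lsub k (X1 k) (X0 k) ψ = -ψ) (i : Fin 5) (hi : ∀ j, x i j = 0) :
    cyclicDefect k x ψ = 0 := by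
  rw [← cyclicDefect_rotate i]
  refine cyclicDefect_eq_zero_of_strand_zero_eq_zero (fun a b => hsymm _ _)
    (fun a => hdiag _) (fun a => ?_) hskew (fun j => by simpa using hi (j + i))
  exact (Equiv.sum_comp (Equiv.addRight i) (x (a + i))).trans (hsum (a + i))

end Kernels

theorem defect_cyclic_and_in_kernels
    (P : Type*) [LieRing P] [LieAlgebra k P] (x : Fin 5 → Fin 5 → P)
    (hsymm : ∀ i j, x i j = x j i) (hdiag : ∀ i, x i i = 0)
    (hsum : ∀ i, ∑ j, x i j = 0)
    (ψ : L2 k) (hskew : lsub k (X1 k) (X0 k) ψ = -ψ) :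
    defect k x ψ =
        lsub k (x 0 1) (x 1 2) ψ + lsub k (x 1 2) (x 2 3) ψ +
          lsub k (x 2 3) (x 3 4) ψ + lsub k (x 3 4) (x 4 0) ψ +
          lsub k (x 4 0) (x 0 1) ψ ∧
    (∀ (i : Fin 5) (Q : Type*) [LieRing Q] [LieAlgebra k Q] (pr : P →ₗ⁅k⁆ Q),
      (∀ j, pr (x i j) = 0) → pr (defect k x ψ) = 0) := by
  refine ⟨defect_eq_cyclic hsymm hskew, fun i Q _ _ pr hpr => ?_⟩
  have hsymm' : ∀ a b, pr (x a b) = pr (x b a) := fun a b => by rw [hsymm]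
  have hdiag' : ∀ a, pr (x a a) = 0 := fun a => by rw [hdiag, map_zero]
  have hsum' : ∀ a, ∑ b, pr (x a b) = 0 := fun a => by rw [← map_sum, hsum, map_zero]
  rw [pr.map_defect, defect_eq_cyclicDefect hsymm' hskew]
  exact cyclicDefect_eq_zero_of_strand_eq_zero hsymm' hdiag' hsum' hskew i hpr
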